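/- Assume A = ln(S/K) + rT ≥ 0 and set k = √(2A). Then V₀ = S e^{rT} ( Φ(k) + (1/√(2π)) ∫_k^∞ ( Q(σ̄₀ < σ₁(s)) + Q(σ̄₀ > σ₂(s)) ) e^{-s²/2} ds ) − K ( Φ(0) + (1/√(2π)) ( ∫₀^∞ Q(σ̄₀ < σ₄(s)) e^{-s²/2} ds − ∫_{-∞}^0 Q(σ̄₀ > σ₄(s)) e^{-s²/2} ds ) ). -/

import Mathlib

/-!
By Fubini, `E[Φ(f)] = (2π)^{-1/2} ∫ Q(s < f) e^{-s²/2} ds` for every random variable `f`. Splitting this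
integral at a point `k` and using `Q(s < f) = 1 - Q(f < s)`, valid for almost every `s` because `f` has at
most countably many atoms, produces the term `Φ(k)`. With `y = σ̄₀√T` one has `d₁ = A/y + y/2 ≥ √(2A)` and
`d₂ = A/y - y/2`, so the events `{s < d₁}`, `{s < d₂}` and `{d₂ < s}` are quadratic inequalities in `y`,
whose roots are `σᵢ(s)√T`.
-/

open MeasureTheory Real Set

/-- The standard normal cumulative distribution function. -/
noncomputable def stdNormalCDF (x : ℝ) : ℝ :=
  (Real.sqrt (2 * Real.pi))⁻¹ * ∫ u in Set.Iio x, Real.exp (-u ^ 2 / 2)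

open Filter

lemma integrable_exp_neg_sq_div_two : Integrable fun s : ℝ => exp (-s ^ 2 / 2) := by
  convert integrable_exp_neg_mul_sq (b := 1 / 2) (by norm_num) using 3; ring

section LayerCake

variable {Ω : Type*} [MeasurableSpace Ω] {Q : Measure Ω} [IsFiniteMeasure Q]

lemma integrable_measureReal_mul_exp_neg_sq {E : ℝ → Set Ω}
    (hE : Measurable fun s => Q.real (E s)) :
    Integrable fun s => Q.real (E s) * exp (-s ^ 2 / 2) :=
  integrable_exp_neg_sq_div_two.bdd_mul hE.aestronglyMeasurable
    (ae_of_all _ fun s => by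
      rw [Real.norm_of_nonneg measureReal_nonneg]
      exact measureReal_mono (subset_univ _))

lemma measurable_measureReal_lt (f : Ω → ℝ) : Measurable fun s => Q.real {ω | s < f ω} :=
  Antitone.measurable fun _ _ hab => measureReal_mono fun _ hω => lt_of_le_of_lt hab hω

lemma measurable_measureReal_gt (f : Ω → ℝ) : Measurable fun s => Q.real {ω | f ω < s} :=
  Monotone.measurable fun _ _ hab => measureReal_mono fun _ hω => lt_of_lt_of_le hω hab

lemma integral_stdNormalCDF_comp {f : Ω → ℝ} (hf : Measurable f) :
    ∫ ω, stdNormalCDF (f ω) ∂Q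
      = (√(2 * π))⁻¹ * ∫ s, Q.real {ω | s < f ω} * exp (-s ^ 2 / 2) := by
  set E := {p : Ω × ℝ | p.2 < f p.1}
  have hE : MeasurableSet E := measurableSet_lt measurable_snd (hf.comp measurable_fst)
  have hint : Integrable (E.indicator fun p => exp (-p.2 ^ 2 / 2)) (Q.prod volume) :=
    (integrable_exp_neg_sq_div_two.comp_snd Q).indicator hE
  simp only [stdNormalCDF]
  rw [integral_const_mul]
  congr 1
  calc ∫ ω, (∫ u in Iio (f ω), exp (-u ^ 2 / 2)) ∂Q
      = ∫ ω, (∫ u, E.indicator (fun p => exp (-p.2 ^ 2 / 2)) (ω, u)) ∂Q := by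
        congr with ω
        rw [← integral_indicator measurableSet_Iio]
        rfl
    _ = ∫ u, ∫ ω, E.indicator (fun p => exp (-p.2 ^ 2 / 2)) (ω, u) ∂Q :=
        integral_integral_swap (f := fun ω u => E.indicator (fun p => exp (-p.2 ^ 2 / 2)) (ω, u))
          hint
    _ = ∫ s, Q.real {ω | s < f ω} * exp (-s ^ 2 / 2) := by
        congr with u
        rw [← smul_eq_mul, ← integral_indicator_const _ (measurableSet_lt measurable_const hf)]
        rfl

end LayerCake

section Split

variable {Ω : Type*} [MeasurableSpace Ω] {Q : Measure Ω} [IsProbabilityMeasure Q] {f : Ω → ℝ}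

lemma ae_measureReal_lt_eq_one_sub (hf : Measurable f) :
    ∀ᵐ s, Q.real {ω | s < f ω} = 1 - Q.real {ω | f ω < s} := by
  filter_upwards [(Measure.countable_meas_level_set_pos (μ := Q) hf).ae_notMem volume] with s hs
  have hnull : ∀ᵐ ω ∂Q, f ω ≠ s :=
    measure_eq_zero_iff_ae_notMem (s := {ω | f ω = s}) |>.1 (by simpa [pos_iff_ne_zero] using hs)
  calc Q.real {ω | s < f ω} = Q.real {ω | s ≤ f ω} :=
        measureReal_congr <| eventuallyEq_set.2 <| hnull.mono fun ω hω =>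
          lt_iff_le_and_ne.trans (and_iff_left hω.symm)
    _ = 1 - Q.real {ω | f ω < s} := by
        rw [← probReal_compl_eq_one_sub (measurableSet_lt hf measurable_const)]
        congr 1
        ext ω
        simp

lemma integral_stdNormalCDF_comp_eq_sub (hf : Measurable f) (k : ℝ) :
    ∫ ω, stdNormalCDF (f ω) ∂Q
      = stdNormalCDF k + (√(2 * π))⁻¹ * ((∫ s in Ioi k, Q.real {ω | s < f ω} * exp (-s ^ 2 / 2))
          - ∫ s in Iio k, Q.real {ω | f ω < s} * exp (-s ^ 2 / 2)) := by
  have hlt := integrable_measureReal_mul_exp_neg_sq (Q := Q) (measurable_measureReal_lt f)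
  have hgt := integrable_measureReal_mul_exp_neg_sq (Q := Q) (measurable_measureReal_gt f)
  have hlow : ∫ s in Iio k, Q.real {ω | s < f ω} * exp (-s ^ 2 / 2)
      = (∫ s in Iio k, exp (-s ^ 2 / 2)) - ∫ s in Iio k, Q.real {ω | f ω < s} * exp (-s ^ 2 / 2) := by
    rw [← integral_sub integrable_exp_neg_sq_div_two.integrableOn hgt.integrableOn]
    refine integral_congr_ae (ae_restrict_of_ae ?_)
    filter_upwards [ae_measureReal_lt_eq_one_sub (Q := Q) hf] with s hs
    rw [hs]; ring
  rw [integral_stdNormalCDF_comp hf, ← integral_add_compl measurableSet_Iio hlt, compl_Iio,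
    integral_Ici_eq_integral_Ioi, hlow, stdNormalCDF]
  ring

lemma integral_stdNormalCDF_comp_of_ae_le (hf : Measurable f) {k : ℝ} (hk : ∀ᵐ ω ∂Q, k ≤ f ω) :
    ∫ ω, stdNormalCDF (f ω) ∂Q
      = stdNormalCDF k + (√(2 * π))⁻¹ * ∫ s in Ioi k, Q.real {ω | s < f ω} * exp (-s ^ 2 / 2) := by
  have hbelow : ∫ s in Iio k, Q.real {ω | f ω < s} * exp (-s ^ 2 / 2) = 0 := by
    refine setIntegral_eq_zero_of_forall_eq_zero fun s hs => ?_
    rw [(measureReal_eq_zero_iff).2, zero_mul]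
    exact measure_eq_zero_iff_ae_notMem.2 <| hk.mono fun ω hω h => (h.trans hs).not_ge hω
  rw [integral_stdNormalCDF_comp_eq_sub hf k, hbelow, sub_zero]

end Split

section Quadratic

variable {A s y : ℝ}

lemma sqrt_two_mul_le_div_add_half (hA : 0 ≤ A) (hy : 0 < y) : √(2 * A) ≤ A / y + y / 2 := by
  have hsq := sq_sqrt (by positivity : 0 ≤ 2 * A)
  rw [div_add_div _ _ hy.ne' two_ne_zero, le_div_iff₀ (by positivity)]
  nlinarith [sq_nonneg (y - √(2 * A))]

lemma lt_div_add_half_iff (hy : 0 < y) (hs : 2 * A ≤ s ^ 2) :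
    s < A / y + y / 2 ↔ y < s - √(s ^ 2 - 2 * A) ∨ s + √(s ^ 2 - 2 * A) < y := by
  have hquad : s < A / y + y / 2 ↔ s ^ 2 - 2 * A < (y - s) ^ 2 := by
    rw [div_add_div _ _ hy.ne' two_ne_zero, lt_div_iff₀ (by positivity)]
    constructor <;> intro h <;> nlinarith
  rw [hquad, ← sqrt_lt_sqrt_iff (sub_nonneg.2 hs), sqrt_sq_eq_abs, lt_abs, or_comm]
  refine or_congr ?_ ?_ <;> constructor <;> intro h <;> linarith

lemma lt_div_sub_half_iff (hA : 0 ≤ A) (hy : 0 < y) :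
    s < A / y - y / 2 ↔ y < -s + √(s ^ 2 + 2 * A) := by
  have hquad : s < A / y - y / 2 ↔ (y + s) ^ 2 < s ^ 2 + 2 * A := by
    rw [div_sub_div _ _ hy.ne' two_ne_zero, lt_div_iff₀ (by positivity)]
    constructor <;> intro h <;> nlinarith
  have hs : -s ≤ √(s ^ 2 + 2 * A) := (neg_le_abs s).trans (abs_le_sqrt (by linarith))
  rw [hquad, ← sqrt_lt_sqrt_iff (sq_nonneg _), sqrt_sq_eq_abs, abs_lt]
  constructor
  · intro h; linarith [h.2]
  · intro h; constructor <;> linarith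

lemma div_sub_half_lt_iff (hA : 0 ≤ A) (hy : 0 < y) :
    A / y - y / 2 < s ↔ -s + √(s ^ 2 + 2 * A) < y := by
  have hquad : A / y - y / 2 < s ↔ s ^ 2 + 2 * A < (y + s) ^ 2 := by
    rw [div_sub_div _ _ hy.ne' two_ne_zero, div_lt_iff₀ (by positivity)]
    constructor <;> intro h <;> nlinarith
  have hs : -s ≤ √(s ^ 2 + 2 * A) := (neg_le_abs s).trans (abs_le_sqrt (by linarith))
  rw [hquad, ← sqrt_lt_sqrt_iff (by positivity), sqrt_sq_eq_abs, lt_abs]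
  constructor
  · rintro (h | h) <;> linarith
  · intro h; left; linarith

lemma add_sq_div_two_div (A y : ℝ) : (A + y ^ 2 / 2) / y = A / y + y / 2 := by
  rcases eq_or_ne y 0 with rfl | hy
  · simp
  · field_simp

end Quadratic

section BlackScholes

variable {Ω : Type*} [MeasurableSpace Ω] {Q : Measure Ω} [IsProbabilityMeasure Q] {σ₀ : Ω → ℝ}
  {A T : ℝ}

lemma integral_stdNormalCDF_d₁ (hσ₀ : Measurable σ₀) (hpos : ∀ᵐ ω ∂Q, 0 < σ₀ ω) (hA : 0 ≤ A)
    (hT : 0 < T) :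
    ∫ ω, stdNormalCDF (A / (σ₀ ω * √T) + σ₀ ω * √T / 2) ∂Q
      = stdNormalCDF √(2 * A) + (√(2 * π))⁻¹ * ∫ s in Ioi √(2 * A),
          (Q.real {ω | σ₀ ω < (s - √(s ^ 2 - 2 * A)) / √T}
            + Q.real {ω | σ₀ ω > (s + √(s ^ 2 - 2 * A)) / √T}) * exp (-s ^ 2 / 2) := by
  have ht : 0 < √T := sqrt_pos.2 hT
  have hm : Measurable fun ω => A / (σ₀ ω * √T) + σ₀ ω * √T / 2 := by fun_prop
  rw [integral_stdNormalCDF_comp_of_ae_le hm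
    (hpos.mono fun ω hω => sqrt_two_mul_le_div_add_half hA (mul_pos hω ht))]
  congr 2
  refine setIntegral_congr_fun measurableSet_Ioi fun s (hs : √(2 * A) < s) => ?_
  have hs2 : 2 * A ≤ s ^ 2 := ((sqrt_lt' ((sqrt_nonneg _).trans_lt hs)).1 hs).le
  have hdisj : Disjoint {ω | σ₀ ω < (s - √(s ^ 2 - 2 * A)) / √T}
      {ω | σ₀ ω > (s + √(s ^ 2 - 2 * A)) / √T} :=
    (Ioi_disjoint_Iio_of_le <| div_le_div_of_nonneg_right
      (by linarith [sqrt_nonneg (s ^ 2 - 2 * A)]) ht.le).symm.preimage σ₀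
  rw [← measureReal_union hdisj (measurableSet_lt measurable_const hσ₀)]
  congr 1
  refine measureReal_congr (eventuallyEq_set.2 (hpos.mono fun ω hω => ?_))
  simp only [mem_ofPred_eq, mem_union, gt_iff_lt, lt_div_iff₀ ht, div_lt_iff₀ ht]
  exact lt_div_add_half_iff (mul_pos hω ht) hs2

lemma integral_stdNormalCDF_d₂ (hσ₀ : Measurable σ₀) (hpos : ∀ᵐ ω ∂Q, 0 < σ₀ ω) (hA : 0 ≤ A)
    (hT : 0 < T) :
    ∫ ω, stdNormalCDF (A / (σ₀ ω * √T) - σ₀ ω * √T / 2) ∂Q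
      = stdNormalCDF 0 + (√(2 * π))⁻¹ *
          ((∫ s in Ioi 0, Q.real {ω | σ₀ ω < (-s + √(s ^ 2 + 2 * A)) / √T} * exp (-s ^ 2 / 2))
            - ∫ s in Iio 0, Q.real {ω | σ₀ ω > (-s + √(s ^ 2 + 2 * A)) / √T}
                * exp (-s ^ 2 / 2)) := by
  have ht : 0 < √T := sqrt_pos.2 hT
  have hm : Measurable fun ω => A / (σ₀ ω * √T) - σ₀ ω * √T / 2 := by fun_prop
  have hlt (s : ℝ) : Q.real {ω | s < A / (σ₀ ω * √T) - σ₀ ω * √T / 2}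
      = Q.real {ω | σ₀ ω < (-s + √(s ^ 2 + 2 * A)) / √T} :=
    measureReal_congr <| eventuallyEq_set.2 <| hpos.mono fun ω hω => by
      simpa only [mem_ofPred_eq, lt_div_iff₀ ht] using lt_div_sub_half_iff hA (mul_pos hω ht)
  have hgt (s : ℝ) : Q.real {ω | A / (σ₀ ω * √T) - σ₀ ω * √T / 2 < s}
      = Q.real {ω | σ₀ ω > (-s + √(s ^ 2 + 2 * A)) / √T} :=
    measureReal_congr <| eventuallyEq_set.2 <| hpos.mono fun ω hω => by
      simpa only [mem_ofPred_eq, gt_iff_lt, div_lt_iff₀ ht] using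
        div_sub_half_lt_iff hA (mul_pos hω ht)
  rw [integral_stdNormalCDF_comp_eq_sub hm 0]
  simp only [hlt, hgt]

end BlackScholes

theorem optionPrice_repr_nonneg_general
    {Ω : Type*} [MeasurableSpace Ω] (Q : Measure Ω) [IsProbabilityMeasure Q]
    (c : ℝ) (hc : 0 < c) (σ₀ : Ω → ℝ) (hσ₀ : Measurable σ₀)
    (hσ₀c : ∀ᵐ ω ∂Q, c ≤ σ₀ ω)
    (S K T r : ℝ) (hT : 0 < T)
    (A : ℝ) (hA : A = Real.log (S / K) + r * T) (hAnonneg : 0 ≤ A)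
    (k : ℝ) (hk : k = Real.sqrt (2 * A))
    (d₁ d₂ : Ω → ℝ)
    (hd₁ : d₁ = fun ω =>
      (Real.log (S / K) + (r + σ₀ ω ^ 2 / 2) * T) / (σ₀ ω * Real.sqrt T))
    (hd₂ : d₂ = fun ω => d₁ ω - σ₀ ω * Real.sqrt T)
    (σ₁ σ₂ σ₄ : ℝ → ℝ)
    (hσ₁ : ∀ s, σ₁ s = s / Real.sqrt T - Real.sqrt (s ^ 2 * T - 2 * T * A) / T)
    (hσ₂ : ∀ s, σ₂ s = s / Real.sqrt T + Real.sqrt (s ^ 2 * T - 2 * T * A) / T)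
    (hσ₄ : ∀ s, σ₄ s = -s / Real.sqrt T + Real.sqrt (s ^ 2 * T + 2 * T * A) / T)
    (V₀ : ℝ)
    (hV₀ : V₀ = S * Real.exp (r * T) * ∫ ω, stdNormalCDF (d₁ ω) ∂Q
      - K * ∫ ω, stdNormalCDF (d₂ ω) ∂Q) :
    V₀ = S * Real.exp (r * T)
          * (stdNormalCDF k
            + (Real.sqrt (2 * Real.pi))⁻¹
                * ∫ s in Set.Ioi k,
                    ((Q {ω | σ₀ ω < σ₁ s}).toReal + (Q {ω | σ₀ ω > σ₂ s}).toReal)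
                      * Real.exp (-s ^ 2 / 2))
        - K * (stdNormalCDF 0
            + (Real.sqrt (2 * Real.pi))⁻¹
                * ((∫ s in Set.Ioi (0 : ℝ),
                      (Q {ω | σ₀ ω < σ₄ s}).toReal * Real.exp (-s ^ 2 / 2))
                  - ∫ s in Set.Iio (0 : ℝ),
                      (Q {ω | σ₀ ω > σ₄ s}).toReal * Real.exp (-s ^ 2 / 2))) := by
  have hpos : ∀ᵐ ω ∂Q, 0 < σ₀ ω := hσ₀c.mono fun ω hω => hc.trans_le hω
  have hd₁' : ∀ ω, d₁ ω = A / (σ₀ ω * √T) + σ₀ ω * √T / 2 := fun ω => by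
    rw [hd₁, ← add_sq_div_two_div, hA, mul_pow, sq_sqrt hT.le]
    ring_nf
  have hd₂' : ∀ ω, d₂ ω = A / (σ₀ ω * √T) - σ₀ ω * √T / 2 := fun ω => by
    simp only [hd₂, hd₁']
    ring
  have hroot : ∀ u, √(u * T) / T = √u / √T := fun u => by
    rw [sqrt_mul' u hT.le, mul_div_assoc, sqrt_div_self', mul_one_div]
  have hσ₁' : ∀ s, σ₁ s = (s - √(s ^ 2 - 2 * A)) / √T := fun s => by
    rw [hσ₁, sub_div, ← hroot]; ring_nf
  have hσ₂' : ∀ s, σ₂ s = (s + √(s ^ 2 - 2 * A)) / √T := fun s => by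
    rw [hσ₂, add_div, ← hroot]; ring_nf
  have hσ₄' : ∀ s, σ₄ s = (-s + √(s ^ 2 + 2 * A)) / √T := fun s => by
    rw [hσ₄, add_div, ← hroot]; ring_nf
  simp only [hV₀, hd₁', hd₂', hσ₁', hσ₂', hσ₄', ← measureReal_def]
  rw [integral_stdNormalCDF_d₁ hσ₀ hpos hAnonneg hT, integral_stdNormalCDF_d₂ hσ₀ hpos hAnonneg hT,
    hk]

/-- If `A = ln(S/K) + rT ≥ 0` and `k = √(2A)`, then the option price
`V₀ = S e^{rT} E[Φ(d₁)] − K E[Φ(d₂)]` satisfies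
`V₀ = S e^{rT} (Φ(k) + (1/√(2π)) ∫_k^∞ (Q(σ̄₀ < σ₁(s)) + Q(σ̄₀ > σ₂(s))) e^{-s²/2} ds)
  − K (Φ(0) + (1/√(2π)) (∫₀^∞ Q(σ̄₀ < σ₄(s)) e^{-s²/2} ds
      − ∫_{-∞}^0 Q(σ̄₀ > σ₄(s)) e^{-s²/2} ds))`. -/
theorem optionPrice_repr_nonneg
    {Ω : Type*} [MeasurableSpace Ω] (Q : Measure Ω) [IsProbabilityMeasure Q]
    (c : ℝ) (hc : 0 < c) (σ₀ : Ω → ℝ) (hσ₀ : Measurable σ₀)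
    (hσ₀c : ∀ᵐ ω ∂Q, c ≤ σ₀ ω)
    (S K T r : ℝ) (hS : 0 < S) (hK : 0 < K) (hT : 0 < T)
    (A : ℝ) (hA : A = Real.log (S / K) + r * T) (hAnonneg : 0 ≤ A)
    (k : ℝ) (hk : k = Real.sqrt (2 * A))
    (d₁ d₂ : Ω → ℝ)
    (hd₁ : d₁ = fun ω =>
      (Real.log (S / K) + (r + σ₀ ω ^ 2 / 2) * T) / (σ₀ ω * Real.sqrt T))
    (hd₂ : d₂ = fun ω => d₁ ω - σ₀ ω * Real.sqrt T)
    (σ₁ σ₂ σ₃ σ₄ : ℝ → ℝ)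
    (hσ₁ : ∀ s, σ₁ s = s / Real.sqrt T - Real.sqrt (s ^ 2 * T - 2 * T * A) / T)
    (hσ₂ : ∀ s, σ₂ s = s / Real.sqrt T + Real.sqrt (s ^ 2 * T - 2 * T * A) / T)
    (hσ₃ : ∀ s, σ₃ s = -s / Real.sqrt T - Real.sqrt (s ^ 2 * T + 2 * T * A) / T)
    (hσ₄ : ∀ s, σ₄ s = -s / Real.sqrt T + Real.sqrt (s ^ 2 * T + 2 * T * A) / T)
    (V₀ : ℝ)
    (hV₀ : V₀ = S * Real.exp (r * T) * ∫ ω, stdNormalCDF (d₁ ω) ∂Q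
      - K * ∫ ω, stdNormalCDF (d₂ ω) ∂Q) :
    V₀ = S * Real.exp (r * T)
          * (stdNormalCDF k
            + (Real.sqrt (2 * Real.pi))⁻¹
                * ∫ s in Set.Ioi k,
                    ((Q {ω | σ₀ ω < σ₁ s}).toReal + (Q {ω | σ₀ ω > σ₂ s}).toReal)
                      * Real.exp (-s ^ 2 / 2))
        - K * (stdNormalCDF 0
            + (Real.sqrt (2 * Real.pi))⁻¹
                * ((∫ s in Set.Ioi (0 : ℝ),
                      (Q {ω | σ₀ ω < σ₄ s}).toReal * Real.exp (-s ^ 2 / 2))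
                  - ∫ s in Set.Iio (0 : ℝ),
                      (Q {ω | σ₀ ω > σ₄ s}).toReal * Real.exp (-s ^ 2 / 2))) :=
  optionPrice_repr_nonneg_general Q c hc σ₀ hσ₀ hσ₀c S K T r hT A hA hAnonneg k hk d₁ d₂ hd₁ hd₂ σ₁
    σ₂ σ₄ hσ₁ hσ₂ hσ₄ V₀ hV₀
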